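/- arXiv:2201.05895 — 6 statements merged into one kernel-verified Lean document; each statement's English description precedes it below -/
import Mathlib

section
/- Let H be a hypergraph with vertices v_1,…,v_n and hyperedges e_1,…,e_m, with no isolated vertices, and let Φ_H be its zeon weak independent set representation. Then for every integer k ≥ 1 and every subset I ⊆ {1,…,n}: if, when Φ_H^k is written in the basis of elements μ ⊗ ε_I (with μ ranging over nonzero monomials ν_1^{t_1}⋯ν_m^{t_m}), some term with idem-Clifford blade ε_I has a nonzero coefficient, then |I| ≤ k and {v_i : i ∈ I} is a weak independent set of H, i.e. it contains no hyperedge of H. -/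
open Finset

/-- Regular-representation action of the generalized-zeon monomial `ν^t = ∏_j ν_j^{t j}`
on the coefficient space of the generalized zeon algebra of signature `s` (tensored with
a further factor recorded in the second coordinate):  the generators `ν_j` commute and
satisfy `ν_j^{s j} = 0`, so multiplication by `ν^t` sends the basis monomial with
exponent vector `w` (admissible means `w j < s j` for all `j`) to the one with exponent
vector `w + t` when that is admissible, and to `0` otherwise. -/
noncomputable def nuMon {m : ℕ} (n : ℕ) (s t : Fin m → ℕ) :
    Module.End ℝ (((Fin m → ℕ) × Finset (Fin n)) → ℝ) where
  toFun c := fun p =>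
    if (∀ j, p.1 j < s j) ∧ (∀ j, t j ≤ p.1 j) then
      c (fun j => p.1 j - t j, p.2)
    else 0
  map_add' x y := by
    funext p
    by_cases h : (∀ j, p.1 j < s j) ∧ (∀ j, t j ≤ p.1 j) <;> simp [h]
  map_smul' r x := by
    funext p
    by_cases h : (∀ j, p.1 j < s j) ∧ (∀ j, t j ≤ p.1 j) <;> simp [h]

/-- Regular-representation action of the idem-Clifford blade `ε_I` (product of the
idempotent generators `ε_i`, `i ∈ I`, satisfying `ε_i ^ 2 = ε_i`) on the coefficient
space. -/
noncomputable def epsBlade (γ β : Type*) [DecidableEq β] (I : Finset β) :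
    Module.End ℝ ((γ × Finset β) → ℝ) where
  toFun c := fun p => ∑ T ∈ p.2.powerset.filter (fun T => T ∪ I = p.2), c (p.1, T)
  map_add' x y := by
    funext p
    simp [Finset.sum_add_distrib]
  map_smul' r x := by
    funext p
    simp [Finset.mul_sum]

/-- The zeon weak independent set representation `Φ_H = Σ_i ψ(v_i) ⊗ ε_i` of the
hypergraph with hyperedges `E : Fin m → Finset (Fin n)`, relative to the signature `s`:
`ψ(v_i) = ∏_{j : v_i ∈ e_j} ν_j`. -/
noncomputable def PhiWeak {n m : ℕ} (E : Fin m → Finset (Fin n)) (s : Fin m → ℕ) :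
    Module.End ℝ (((Fin m → ℕ) × Finset (Fin n)) → ℝ) :=
  ∑ i : Fin n,
    nuMon n s (fun j => if i ∈ E j then 1 else 0) *
      epsBlade (Fin m → ℕ) (Fin n) {i}

/-- The coefficient vector of `1` in the algebra: the indicator of the empty monomial. -/
noncomputable def delta0 (n m : ℕ) : ((Fin m → ℕ) × Finset (Fin n)) → ℝ :=
  fun p => if p = ((fun _ => 0), (∅ : Finset (Fin n))) then 1 else 0

lemma key {n m : ℕ} (E : Fin m → Finset (Fin n)) (s : Fin m → ℕ) :
    ∀ (k : ℕ) (t : Fin m → ℕ) (I : Finset (Fin n)),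
      ((PhiWeak E s) ^ k) (delta0 n m) (t, I) ≠ 0 →
      ∃ L : List (Fin n), L.length = k ∧ I ⊆ L.toFinset ∧
        (∀ j, t j = (L.filter (fun i => i ∈ E j)).length) ∧
        (k = 0 ∨ ∀ j, t j < s j) := by
  intro k
  induction k with
  | zero =>
    intro t I h
    rw [pow_zero, Module.End.one_apply, delta0, ite_ne_right_iff] at h
    obtain ⟨heq, -⟩ := h
    have h1 : t = fun _ => 0 := congrArg Prod.fst heq
    have h2 : I = ∅ := congrArg Prod.snd heq
    refine ⟨[], rfl, by simp [h2], fun j => by simp [h1], Or.inl rfl⟩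
  | succ k ih =>
    intro t I h
    rw [pow_succ'] at h
    rw [Module.End.mul_apply] at h
    set c := ((PhiWeak E s) ^ k) (delta0 n m) with hc
    rw [PhiWeak, LinearMap.sum_apply] at h
    rw [Finset.sum_apply] at h
    obtain ⟨i, -, hi⟩ := Finset.exists_ne_zero_of_sum_ne_zero h
    rw [Module.End.mul_apply] at hi
    simp only [nuMon, LinearMap.coe_mk, AddHom.coe_mk] at hi
    rw [ite_ne_right_iff] at hi
    obtain ⟨⟨hlt, hle⟩, hne⟩ := hi
    simp only [epsBlade, LinearMap.coe_mk, AddHom.coe_mk] at hne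
    obtain ⟨T, hT, hTne⟩ := Finset.exists_ne_zero_of_sum_ne_zero hne
    rw [Finset.mem_filter, Finset.mem_powerset] at hT
    obtain ⟨hTI, hTu⟩ := hT
    obtain ⟨L, hlen, hsub, hcnt, -⟩ := ih _ _ hTne
    refine ⟨i :: L, by simp [hlen], ?_, ?_, Or.inr hlt⟩
    · rw [List.toFinset_cons]
      intro x hx
      rw [← hTu] at hx
      rcases Finset.mem_union.mp hx with hx | hx
      · exact Finset.mem_insert_of_mem (hsub hx)
      · simp at hx; simp [hx]
    · intro j
      have h1 := hcnt j
      have h2 := hle j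
      by_cases hij : i ∈ E j
      · simp only [hij, if_true] at h2 h1
        rw [List.filter_cons, if_pos (by simpa using hij), List.length_cons, ← h1]
        omega
      · simp only [hij, if_false] at h2 h1
        rw [List.filter_cons, if_neg (by simpa using hij), ← h1]
        omega

/-- Let `H` be a hypergraph with `n` vertices and `m` nonempty
hyperedges and no isolated vertices, and let `Φ_H` be its zeon weak independent set
representation, with signature `s j = |e_j|`.  If, for some `k ≥ 1`, the expansion of
`Φ_H^k` contains a term with idem-Clifford blade `ε_I` having a nonzero coefficient
(i.e. some joint coefficient with idem part `I` is nonzero), then `|I| ≤ k` and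
`{v_i : i ∈ I}` is a weak independent set of `H`, i.e. it contains no hyperedge. -/
theorem weak_independent_set_representation {n m : ℕ} (E : Fin m → Finset (Fin n))
    (hE : ∀ j, (E j).Nonempty) (hiso : ∀ i : Fin n, ∃ j, i ∈ E j)
    (k : ℕ) (hk : 1 ≤ k) (I : Finset (Fin n))
    (h : ∃ t : Fin m → ℕ,
      ((PhiWeak E (fun j => (E j).card)) ^ k) (delta0 n m) (t, I) ≠ 0) :
    I.card ≤ k ∧ ∀ j : Fin m, ¬ E j ⊆ I := by
  obtain ⟨t, ht⟩ := h
  obtain ⟨L, hlen, hsub, hcnt, hor⟩ := key E _ k t I ht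
  have hlt : ∀ j, t j < (E j).card := hor.resolve_left (by omega)
  constructor
  · calc I.card ≤ L.toFinset.card := Finset.card_le_card hsub
      _ ≤ L.length := L.toFinset_card_le
      _ = k := hlen
  · intro j hEj
    have hsub2 : E j ⊆ (L.filter (fun i => i ∈ E j)).toFinset := by
      intro x hx
      rw [List.mem_toFinset, List.mem_filter]
      exact ⟨List.mem_toFinset.mp (hsub (hEj hx)), by simpa using hx⟩
    have : (E j).card ≤ t j := by
      calc (E j).card ≤ (L.filter (fun i => i ∈ E j)).toFinset.card :=
            Finset.card_le_card hsub2
        _ ≤ (L.filter (fun i => i ∈ E j)).length := List.toFinset_card_le _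
        _ = t j := (hcnt j).symm
    exact absurd (hlt j) (by omega)
end

section
/- Let H be a hypergraph with vertices v_1,…,v_n and hyperedges e_1,…,e_m, with no isolated vertices, and let Φ_H be its zeon weak independent set representation. Then for every integer k ≥ 1 and every subset I ⊆ {1,…,n} with |I| = k, the component of Φ_H^k on the idem-Clifford blade ε_I equals k! · (∏_{i∈I} ψ(v_i)) ⊗ ε_I; in particular, this component is nonzero if and only if {v_i : i ∈ I} is a weak independent set of H. Consequently, every weak independent set of size k in H is represented by the index set of some nonzero ε_I-term of Φ_H^k. -/
open Finset

-- auxiliary lemmas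

lemma filter_union_singleton_mem {n : ℕ} (i : Fin n) (S : Finset (Fin n)) (hi : i ∈ S) :
    S.powerset.filter (fun T => T ∪ {i} = S) = {S.erase i, S} := by
  ext T
  simp only [mem_filter, mem_powerset, mem_insert, mem_singleton]
  constructor
  · rintro ⟨hTS, hU⟩
    by_cases hiT : i ∈ T
    · right
      rw [Finset.union_eq_left.2 (Finset.singleton_subset_iff.2 hiT)] at hU
      exact hU
    · left
      apply Finset.Subset.antisymm
      · intro x hx
        exact Finset.mem_erase.2 ⟨fun h => hiT (h ▸ hx), hTS hx⟩
      · intro x hx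
        obtain ⟨hxi, hxS⟩ := Finset.mem_erase.1 hx
        have hx' : x ∈ T ∪ {i} := hU ▸ hxS
        rcases Finset.mem_union.1 hx' with h | h
        · exact h
        · exact absurd (Finset.mem_singleton.1 h) hxi
  · rintro (rfl | rfl)
    · refine ⟨Finset.erase_subset _ _, ?_⟩
      rw [show ({i} : Finset (Fin n)) = insert i ∅ from rfl]
      rw [Finset.union_insert, Finset.union_empty]
      exact Finset.insert_erase hi
    · exact ⟨Finset.Subset.refl _, Finset.union_eq_left.2 (Finset.singleton_subset_iff.2 hi)⟩

lemma filter_union_singleton_notMem {n : ℕ} (i : Fin n) (S : Finset (Fin n)) (hi : i ∉ S) :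
    S.powerset.filter (fun T => T ∪ {i} = S) = ∅ := by
  refine Finset.filter_eq_empty_iff.2 fun T _ h => ?_
  exact hi (h ▸ Finset.mem_union_right _ (Finset.mem_singleton_self i))

lemma term_eval {n m : ℕ} (E : Fin m → Finset (Fin n)) (i : Fin n)
    (c : ((Fin m → ℕ) × Finset (Fin n)) → ℝ) (w : Fin m → ℕ) (S : Finset (Fin n)) :
    ((nuMon n (fun j => (E j).card) (fun j => if i ∈ E j then 1 else 0) *
        epsBlade (Fin m → ℕ) (Fin n) {i}) c) (w, S) =
      if i ∈ S then
        (if (∀ j, w j < (E j).card) ∧ (∀ j, (if i ∈ E j then 1 else 0) ≤ w j) then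
          c (fun j => w j - (if i ∈ E j then 1 else 0), S.erase i) +
          c (fun j => w j - (if i ∈ E j then 1 else 0), S) else 0)
      else 0 := by
  have hL : ((nuMon n (fun j => (E j).card) (fun j => if i ∈ E j then 1 else 0) *
        epsBlade (Fin m → ℕ) (Fin n) {i}) c) (w, S) =
      if (∀ j, w j < (E j).card) ∧ (∀ j, (if i ∈ E j then 1 else 0) ≤ w j) then
        ∑ T ∈ S.powerset.filter (fun T => T ∪ {i} = S),
          c (fun j => w j - (if i ∈ E j then 1 else 0), T)
      else 0 := rfl
  rw [hL]
  by_cases hc : (∀ j, w j < (E j).card) ∧ (∀ j, (if i ∈ E j then 1 else 0) ≤ w j)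
  · rw [if_pos hc]
    by_cases hi : i ∈ S
    · rw [if_pos hi, if_pos hc, filter_union_singleton_mem i S hi,
        Finset.sum_pair (fun h => (Finset.erase_eq_self.1 h) hi)]
    · rw [if_neg hi, filter_union_singleton_notMem i S hi, Finset.sum_empty]
  · rw [if_neg hc]
    by_cases hi : i ∈ S <;> simp [hi, hc]

lemma Phi_apply {n m : ℕ} (E : Fin m → Finset (Fin n))
    (c : ((Fin m → ℕ) × Finset (Fin n)) → ℝ) (w : Fin m → ℕ) (S : Finset (Fin n)) :
    PhiWeak E (fun j => (E j).card) c (w, S) =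
      ∑ i ∈ S,
        (if (∀ j, w j < (E j).card) ∧ (∀ j, (if i ∈ E j then 1 else 0) ≤ w j) then
          c (fun j => w j - (if i ∈ E j then 1 else 0), S.erase i) +
          c (fun j => w j - (if i ∈ E j then 1 else 0), S) else 0) := by
  rw [PhiWeak, LinearMap.sum_apply, Finset.sum_apply]
  rw [Finset.sum_congr rfl (fun i _ => term_eval E i c w S)]
  rw [Finset.sum_ite_mem, Finset.univ_inter]

lemma card_inter_erase {n m : ℕ} (E : Fin m → Finset (Fin n)) (i : Fin n)
    (S : Finset (Fin n)) (hi : i ∈ S) (j : Fin m) :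
    (E j ∩ S.erase i).card = (E j ∩ S).card - (if i ∈ E j then 1 else 0) := by
  rw [Finset.inter_erase]
  by_cases hij : i ∈ E j
  · rw [Finset.card_erase_of_mem (Finset.mem_inter.2 ⟨hij, hi⟩), if_pos hij]
  · rw [Finset.erase_eq_of_notMem (fun h => hij (Finset.mem_inter.1 h).1), if_neg hij]
    simp

lemma main_formula {n m : ℕ} (E : Fin m → Finset (Fin n)) (hE : ∀ j, (E j).Nonempty) :
    ∀ (r : ℕ) (S : Finset (Fin n)) (w : Fin m → ℕ), r ≤ S.card →
      ((PhiWeak E (fun j => (E j).card)) ^ r) (delta0 n m) (w, S) =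
        if S.card = r ∧ w = (fun j => (E j ∩ S).card) ∧ (∀ j, w j < (E j).card)
        then (r.factorial : ℝ) else 0 := by
  intro r
  induction r with
  | zero =>
    intro S w _
    rw [pow_zero, Module.End.one_apply]
    by_cases hS : S = ∅
    · subst hS
      by_cases hw : w = fun _ => 0
      · subst hw
        rw [delta0, if_pos rfl, if_pos]
        · simp
        · refine ⟨rfl, ?_, fun j => (hE j).card_pos⟩
          funext j; simp
      · rw [delta0, if_neg, if_neg]
        · rintro ⟨-, h, -⟩
          exact hw (by funext j; simpa using congrFun h j)
        · intro h
          exact hw (congrArg Prod.fst h)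
    · rw [delta0, if_neg, if_neg]
      · rintro ⟨h, -, -⟩
        exact hS (Finset.card_eq_zero.1 h)
      · intro h
        exact hS (congrArg Prod.snd h)
  | succ r ih =>
    intro S w hcard
    rw [pow_succ', Module.End.mul_apply, Phi_apply]
    have herase : ∀ i ∈ S, (S.erase i).card = S.card - 1 :=
      fun i hi => Finset.card_erase_of_mem hi
    by_cases hSc : S.card = r + 1
    · have hsum : ∀ i ∈ S,
          (if (∀ j, w j < (E j).card) ∧ (∀ j, (if i ∈ E j then 1 else 0) ≤ w j) then
            ((PhiWeak E (fun j => (E j).card)) ^ r) (delta0 n m)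
              (fun j => w j - (if i ∈ E j then 1 else 0), S.erase i) +
            ((PhiWeak E (fun j => (E j).card)) ^ r) (delta0 n m)
              (fun j => w j - (if i ∈ E j then 1 else 0), S) else 0) =
          if (w = fun j => (E j ∩ S).card) ∧ (∀ j, w j < (E j).card)
            then (r.factorial : ℝ) else 0 := by
        intro i hi
        have hec : (S.erase i).card = r := by rw [herase i hi, hSc]; simp
        have h1 : ((PhiWeak E (fun j => (E j).card)) ^ r) (delta0 n m)
            (fun j => w j - (if i ∈ E j then 1 else 0), S) = 0 := by
          rw [ih S _ (by omega), if_neg]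
          rintro ⟨h, -, -⟩; omega
        rw [h1, ih (S.erase i) _ (by omega), add_zero]
        by_cases hmain : (w = fun j => (E j ∩ S).card) ∧ (∀ j, w j < (E j).card)
        · obtain ⟨hw, hadm⟩ := hmain
          have hchi : ∀ j, (if i ∈ E j then 1 else 0) ≤ w j := by
            intro j
            rw [hw]
            by_cases hij : i ∈ E j
            · simpa [hij] using Finset.card_pos.2 ⟨i, Finset.mem_inter.2 ⟨hij, hi⟩⟩
            · simp [hij]
          have hmid : (S.erase i).card = r ∧
              ((fun j => w j - (if i ∈ E j then 1 else 0)) =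
                fun j => (E j ∩ S.erase i).card) ∧
              (∀ j, w j - (if i ∈ E j then 1 else 0) < (E j).card) := by
            refine ⟨hec, ?_, fun j => lt_of_le_of_lt (Nat.sub_le _ _) (hadm j)⟩
            funext j
            rw [card_inter_erase E i S hi j, hw]
          rw [if_pos ⟨hadm, hchi⟩, if_pos hmid, if_pos ⟨hw, hadm⟩]
        · rw [if_neg hmain]
          by_cases hc : (∀ j, w j < (E j).card) ∧ (∀ j, (if i ∈ E j then 1 else 0) ≤ w j)
          · rw [if_pos hc, if_neg]
            rintro ⟨-, hτ, -⟩
            refine hmain ⟨?_, hc.1⟩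
            funext j
            have hτj := congrFun hτ j
            rw [card_inter_erase E i S hi j] at hτj
            have hchi2 : (if i ∈ E j then 1 else 0) ≤ (E j ∩ S).card := by
              by_cases hij : i ∈ E j
              · simpa [hij] using Finset.card_pos.2 ⟨i, Finset.mem_inter.2 ⟨hij, hi⟩⟩
              · simp [hij]
            have hchi1 := hc.2 j
            omega
          · rw [if_neg hc]
      rw [Finset.sum_congr rfl hsum, Finset.sum_const, hSc]
      by_cases hmain : (w = fun j => (E j ∩ S).card) ∧ (∀ j, w j < (E j).card)
      · rw [if_pos hmain, if_pos ⟨rfl, hmain.1, hmain.2⟩, nsmul_eq_mul,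
          Nat.factorial_succ]
        push_cast
        ring
      · rw [if_neg hmain, if_neg (fun h => hmain ⟨h.2.1, h.2.2⟩)]
        simp
    · have hgt : r + 1 < S.card := lt_of_le_of_ne hcard (fun h => hSc h.symm)
      rw [if_neg (fun h => hSc h.1)]
      apply Finset.sum_eq_zero
      intro i hi
      have h1 : ((PhiWeak E (fun j => (E j).card)) ^ r) (delta0 n m)
          (fun j => w j - (if i ∈ E j then 1 else 0), S) = 0 := by
        rw [ih S _ (by omega), if_neg]
        rintro ⟨h, -, -⟩; omega
      have h2 : ((PhiWeak E (fun j => (E j).card)) ^ r) (delta0 n m)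
          (fun j => w j - (if i ∈ E j then 1 else 0), S.erase i) = 0 := by
        rw [ih (S.erase i) _ (by rw [herase i hi]; omega), if_neg]
        rintro ⟨h, -, -⟩
        rw [herase i hi] at h; omega
      rw [h1, h2, add_zero, ite_self]

lemma rhs_eval {n m : ℕ} (E : Fin m → Finset (Fin n)) (I : Finset (Fin n)) (t : Fin m → ℕ) :
    ((nuMon n (fun j => (E j).card) (fun j => (E j ∩ I).card) *
        epsBlade (Fin m → ℕ) (Fin n) I) (delta0 n m)) (t, I) =
      if (t = fun j => (E j ∩ I).card) ∧ (∀ j, t j < (E j).card) then 1 else 0 := by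
  have hL : ((nuMon n (fun j => (E j).card) (fun j => (E j ∩ I).card) *
        epsBlade (Fin m → ℕ) (Fin n) I) (delta0 n m)) (t, I) =
      if (∀ j, t j < (E j).card) ∧ (∀ j, (E j ∩ I).card ≤ t j) then
        ∑ T ∈ I.powerset.filter (fun T => T ∪ I = I),
          delta0 n m (fun j => t j - (E j ∩ I).card, T)
      else 0 := rfl
  rw [hL]
  have hfil : I.powerset.filter (fun T => T ∪ I = I) = I.powerset := by
    apply Finset.filter_true_of_mem
    intro T hT
    exact Finset.union_eq_right.2 (Finset.mem_powerset.1 hT)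
  rw [hfil]
  by_cases ht : t = fun j => (E j ∩ I).card
  · subst ht
    by_cases hadm : ∀ j, (E j ∩ I).card < (E j).card
    · rw [if_pos ⟨hadm, fun j => le_refl _⟩, if_pos ⟨rfl, hadm⟩]
      have hz : (fun j => (E j ∩ I).card - (E j ∩ I).card) = (fun _ : Fin m => 0) := by
        funext j; simp
      rw [hz]
      simp [delta0, Prod.ext_iff]
    · rw [if_neg (fun h => hadm h.1), if_neg (fun h => hadm h.2)]
  · have hB : ¬((t = fun j => (E j ∩ I).card) ∧ (∀ j, t j < (E j).card)) :=
      fun h => ht h.1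
    rw [if_neg hB]
    by_cases hc : (∀ j, t j < (E j).card) ∧ (∀ j, (E j ∩ I).card ≤ t j)
    · rw [if_pos hc]
      apply Finset.sum_eq_zero
      intro T _
      rw [delta0, if_neg]
      intro h
      apply ht
      funext j
      have h1 : t j - (E j ∩ I).card = 0 := congrFun (congrArg Prod.fst h) j
      have h2 := hc.2 j
      omega
    · rw [if_neg hc]

/-- Let `H` be a hypergraph with `n` vertices and `m` nonempty
hyperedges and no isolated vertices, and let `Φ_H` be its zeon weak independent set
representation, with signature `s j = |e_j|`.  For every `k ≥ 1` and every vertex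
subset `I` with `|I| = k`, the component of `Φ_H^k` on the idem-Clifford blade `ε_I`
equals `k! (∏_{i ∈ I} ψ(v_i)) ⊗ ε_I` (here `∏_{i ∈ I} ψ(v_i)` is the generalized-zeon
monomial with exponent `|e_j ∩ I|` at `ν_j`), and this component is nonzero if and only
if `{v_i : i ∈ I}` is a weak independent set of `H`.  In particular every weak
independent set of size `k` in `H` is represented by the index set of some nonzero
`ε_I`-term of `Φ_H^k`. -/
theorem weak_independent_set_component {n m : ℕ} (E : Fin m → Finset (Fin n))
    (hE : ∀ j, (E j).Nonempty) (hiso : ∀ i : Fin n, ∃ j, i ∈ E j)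
    (k : ℕ) (hk : 1 ≤ k) (I : Finset (Fin n)) (hI : I.card = k) :
    (∀ t : Fin m → ℕ,
      ((PhiWeak E (fun j => (E j).card)) ^ k) (delta0 n m) (t, I) =
        (Nat.factorial k : ℝ) *
          ((nuMon n (fun j => (E j).card) (fun j => (E j ∩ I).card) *
              epsBlade (Fin m → ℕ) (Fin n) I) (delta0 n m) (t, I))) ∧
    ((∃ t : Fin m → ℕ,
        ((PhiWeak E (fun j => (E j).card)) ^ k) (delta0 n m) (t, I) ≠ 0) ↔
      ∀ j : Fin m, ¬ E j ⊆ I) := by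
  constructor
  · intro t
    rw [main_formula E hE k I t (le_of_eq hI.symm), rhs_eval]
    by_cases hmain : (t = fun j => (E j ∩ I).card) ∧ (∀ j, t j < (E j).card)
    · rw [if_pos ⟨hI, hmain.1, hmain.2⟩, if_pos hmain, mul_one]
    · rw [if_neg (fun h => hmain ⟨h.2.1, h.2.2⟩), if_neg hmain, mul_zero]
  · constructor
    · rintro ⟨t, ht⟩ j hsub
      rw [main_formula E hE k I t (le_of_eq hI.symm)] at ht
      by_cases hmain : I.card = k ∧ (t = fun j => (E j ∩ I).card) ∧
          (∀ j, t j < (E j).card)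
      · obtain ⟨-, hw, hadm⟩ := hmain
        have h1 : t j < (E j).card := hadm j
        have h2 : t j = (E j ∩ I).card := congrFun hw j
        rw [Finset.inter_eq_left.2 hsub] at h2
        omega
      · exact ht (if_neg hmain)
    · intro h
      refine ⟨fun j => (E j ∩ I).card, ?_⟩
      rw [main_formula E hE k I _ (le_of_eq hI.symm), if_pos]
      · exact Nat.cast_ne_zero.2 (Nat.factorial_ne_zero k)
      · refine ⟨hI, rfl, fun j => ?_⟩
        apply Finset.card_lt_card
        rw [Finset.ssubset_iff_subset_ne]
        exact ⟨Finset.inter_subset_left, fun heq => h j (Finset.inter_eq_left.1 heq)⟩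
end

section
/- Let H be a hypergraph with vertices v_1,…,v_n and hyperedges e_1,…,e_m, with no isolated vertices, and fix k ≥ 1. Label every hyperedge with a generalized zeon generator of nilpotency index k+1; that is, in 𝔷_s ⊗ 𝔦_n with signature s = (k+1, …, k+1), define Φ = Σ_{i=1}^n (∏_{j : v_i ∈ e_j} ν_j) ⊗ ε_i. Then for every integer r ≥ 1 and every subset I ⊆ {1,…,n} with |I| = r, the component of Φ^r on the idem-Clifford blade ε_I equals r! · (∏_{i∈I} ∏_{j : v_i ∈ e_j} ν_j) ⊗ ε_I, and it is nonzero if and only if {v_i : i ∈ I} is a k-independent set of H, i.e. |{v_i : i ∈ I} ∩ e_j| ≤ k for every hyperedge e_j. -/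
open Finset

namespace KIndepAux

variable {n m : ℕ}

/-- `ψ I j = |E j ∩ I|`, the exponent vector of the monomial `∏_{i ∈ I} ψ(v_i)`. -/
def psi (E : Fin m → Finset (Fin n)) (I : Finset (Fin n)) : Fin m → ℕ :=
  fun j => (E j ∩ I).card

lemma psi_erase (E : Fin m → Finset (Fin n)) (I : Finset (Fin n)) (i : Fin n) (hi : i ∈ I)
    (j : Fin m) :
    psi E (I.erase i) j + (if i ∈ E j then 1 else 0) = psi E I j := by
  unfold psi
  rw [Finset.inter_erase]
  by_cases h : i ∈ E j
  · have hm : i ∈ E j ∩ I := Finset.mem_inter.mpr ⟨h, hi⟩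
    rw [if_pos h, Finset.card_erase_of_mem hm,
      Nat.sub_add_cancel (Finset.card_pos.mpr ⟨i, hm⟩)]
  · rw [if_neg h, Finset.erase_eq_of_notMem (fun hm => h (Finset.mem_inter.mp hm).1), add_zero]

lemma filter_union_singleton (S : Finset (Fin n)) (i : Fin n) :
    S.powerset.filter (fun T => T ∪ {i} = S) =
      if i ∈ S then ({S, S.erase i} : Finset (Finset (Fin n))) else ∅ := by
  ext T
  by_cases hi : i ∈ S <;>
    simp only [hi, if_true, if_false, Finset.mem_filter, Finset.mem_powerset,
      Finset.notMem_empty, Finset.mem_insert, Finset.mem_singleton, iff_false]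
  · constructor
    · rintro ⟨hsub, hun⟩
      rw [Finset.union_comm, ← Finset.insert_eq] at hun
      by_cases hT : i ∈ T
      · left; rw [← hun, Finset.insert_eq_of_mem hT]
      · right
        rw [← hun, Finset.erase_insert hT]
    · rintro (rfl | rfl)
      · exact ⟨Finset.Subset.refl _, by rw [Finset.union_comm, ← Finset.insert_eq, Finset.insert_eq_of_mem hi]⟩
      · exact ⟨Finset.erase_subset _ _, by rw [Finset.union_comm, ← Finset.insert_eq, Finset.insert_erase hi]⟩
  · rintro ⟨hsub, hun⟩
    exact hi (hun ▸ Finset.mem_union_right T (Finset.mem_singleton_self i))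

lemma phi_apply (E : Fin m → Finset (Fin n)) (s : Fin m → ℕ)
    (c : ((Fin m → ℕ) × Finset (Fin n)) → ℝ) (t : Fin m → ℕ) (S : Finset (Fin n)) :
    PhiWeak E s c (t, S) =
      ∑ i : Fin n,
        if (∀ j, t j < s j) ∧ (∀ j, (if i ∈ E j then 1 else 0) ≤ t j) then
          ∑ T ∈ S.powerset.filter (fun T => T ∪ {i} = S),
            c (fun j => t j - if i ∈ E j then 1 else 0, T)
        else 0 := by
  simp only [PhiWeak, LinearMap.sum_apply, Finset.sum_apply, Module.End.mul_apply,
    nuMon, epsBlade, LinearMap.coe_mk, AddHom.coe_mk]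



lemma pow_apply_zero_of_card {n m : ℕ} (E : Fin m → Finset (Fin n)) (s : Fin m → ℕ) :
    ∀ (r : ℕ) (t : Fin m → ℕ) (S : Finset (Fin n)), r < S.card →
      ((PhiWeak E s) ^ r) (delta0 n m) (t, S) = 0 := by
  intro r
  induction r with
  | zero =>
    intro t S hS
    have hne : S ≠ ∅ := by
      intro h; rw [h] at hS; simp at hS
    simp only [pow_zero, Module.End.one_apply, delta0]
    rw [if_neg]
    intro h
    exact hne (congrArg Prod.snd h)
  | succ r ih =>
    intro t S hS
    rw [pow_succ', Module.End.mul_apply, phi_apply]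
    apply Finset.sum_eq_zero
    intro i _
    split
    · apply Finset.sum_eq_zero
      intro T hT
      simp only [Finset.mem_filter, Finset.mem_powerset] at hT
      apply ih
      have hcard : S.card ≤ T.card + 1 := by
        calc S.card = (T ∪ {i}).card := by rw [hT.2]
          _ ≤ T.card + ({i} : Finset (Fin n)).card := Finset.card_union_le _ _
          _ = T.card + 1 := by simp
      omega
    · rfl

lemma pow_apply_card {n m : ℕ} (E : Fin m → Finset (Fin n)) (s : Fin m → ℕ)
    (hs : ∀ j, 0 < s j) :
    ∀ (r : ℕ) (t : Fin m → ℕ) (I : Finset (Fin n)), I.card = r →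
      ((PhiWeak E s) ^ r) (delta0 n m) (t, I) =
        if (∀ j, t j < s j) ∧ t = psi E I then (r.factorial : ℝ) else 0 := by
  intro r
  induction r with
  | zero =>
    intro t I hI
    rw [Finset.card_eq_zero] at hI; subst hI
    simp only [pow_zero, Module.End.one_apply, delta0, Nat.factorial_zero, Nat.cast_one]
    have hpsi : psi E (∅ : Finset (Fin n)) = fun _ => 0 := by
      funext j; simp [psi]
    by_cases ht : t = fun _ => 0
    · subst ht
      rw [if_pos rfl, if_pos ⟨hs, hpsi.symm⟩]
    · rw [if_neg, if_neg]
      · rintro ⟨-, h2⟩; exact ht (h2.trans hpsi)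
      · intro h; exact ht (congrArg Prod.fst h)
  | succ r ih =>
    intro t I hI
    rw [pow_succ', Module.End.mul_apply, phi_apply]
    have key : ∀ i ∈ (Finset.univ : Finset (Fin n)),
        (if (∀ j, t j < s j) ∧ (∀ j, (if i ∈ E j then 1 else 0) ≤ t j) then
          ∑ T ∈ I.powerset.filter (fun T => T ∪ {i} = I),
            ((PhiWeak E s) ^ r) (delta0 n m) (fun j => t j - if i ∈ E j then 1 else 0, T)
        else 0) =
        if i ∈ I then
          (if (∀ j, t j < s j) ∧ t = psi E I then (r.factorial : ℝ) else 0)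
        else 0 := by
      intro i _
      by_cases hi : i ∈ I
      · rw [filter_union_singleton, if_pos hi, if_pos hi]
        have hne : I ≠ I.erase i := fun h => Finset.notMem_erase i I (h ▸ hi)
        rw [Finset.sum_pair hne]
        rw [pow_apply_zero_of_card E s r _ I (by omega)]
        rw [ih _ (I.erase i) (by rw [Finset.card_erase_of_mem hi, hI]; rfl)]
        rw [zero_add]
        by_cases hc : (∀ j, t j < s j) ∧ t = psi E I
        · rw [if_pos hc]
          obtain ⟨h1, h2⟩ := hc
          have hle : ∀ j, (if i ∈ E j then 1 else 0) ≤ t j := by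
            intro j
            by_cases hij : i ∈ E j
            · rw [if_pos hij, h2]
              exact Finset.card_pos.mpr ⟨i, Finset.mem_inter.mpr ⟨hij, hi⟩⟩
            · rw [if_neg hij]; exact Nat.zero_le _
          rw [if_pos ⟨h1, hle⟩, if_pos]
          refine ⟨fun j => lt_of_le_of_lt (Nat.sub_le _ _) (h1 j), ?_⟩
          funext j
          have he := psi_erase E I i hi j
          have h2j : t j = psi E I j := congrFun h2 j
          have hlej := hle j
          omega
        · rw [if_neg hc]
          split
          · rename_i h1
            rw [if_neg]
            rintro ⟨h2, h3⟩
            apply hc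
            refine ⟨h1.1, ?_⟩
            funext j
            have he := psi_erase E I i hi j
            have h3j : t j - (if i ∈ E j then 1 else 0) = psi E (I.erase i) j := congrFun h3 j
            have h1j := h1.2 j
            omega
          · rfl
      · rw [filter_union_singleton, if_neg hi, if_neg hi]
        split
        · exact Finset.sum_empty
        · rfl
    rw [Finset.sum_congr rfl key]
    rw [Finset.sum_ite_mem, Finset.univ_inter, Finset.sum_const, hI]
    by_cases hc : (∀ j, t j < s j) ∧ t = psi E I
    · rw [if_pos hc, if_pos hc, nsmul_eq_mul, Nat.factorial_succ]
      push_cast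
      ring
    · rw [if_neg hc, if_neg hc, smul_zero]



lemma rhs_apply {n m : ℕ} (E : Fin m → Finset (Fin n)) (s : Fin m → ℕ)
    (t : Fin m → ℕ) (I : Finset (Fin n)) :
    (nuMon n s (psi E I) * epsBlade (Fin m → ℕ) (Fin n) I) (delta0 n m) (t, I) =
      if (∀ j, t j < s j) ∧ t = psi E I then 1 else 0 := by
  simp only [Module.End.mul_apply, nuMon, epsBlade, LinearMap.coe_mk, AddHom.coe_mk]
  have hfil : I.powerset.filter (fun T => T ∪ I = I) = I.powerset := by
    apply Finset.filter_true_of_mem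
    intro T hT
    exact Finset.union_eq_right.mpr (Finset.mem_powerset.mp hT)
  rw [hfil]
  by_cases hc : (∀ j, t j < s j) ∧ t = psi E I
  · obtain ⟨h1, h2⟩ := hc
    have hle : ∀ j, psi E I j ≤ t j := fun j => le_of_eq (congrFun h2 j).symm
    rw [if_pos ⟨h1, hle⟩, if_pos ⟨h1, h2⟩]
    have hzero : (fun j => t j - psi E I j) = (fun _ => 0 : Fin m → ℕ) := by
      funext j
      have := congrFun h2 j
      omega
    rw [show (∑ T ∈ I.powerset, delta0 n m (fun j => t j - psi E I j, T)) =
        ∑ T ∈ I.powerset, (if T = (∅ : Finset (Fin n)) then (1 : ℝ) else 0) from ?_]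
    · rw [Finset.sum_ite_eq' I.powerset (∅ : Finset (Fin n)) (fun _ => (1 : ℝ)),
        if_pos (Finset.mem_powerset.mpr (Finset.empty_subset I))]
    · apply Finset.sum_congr rfl
      intro T _
      simp only [delta0, hzero, Prod.mk.injEq, true_and]
  · rw [if_neg hc]
    split
    · rename_i h1
      apply Finset.sum_eq_zero
      intro T _
      simp only [delta0, Prod.mk.injEq]
      rw [if_neg]
      rintro ⟨hz, -⟩
      apply hc
      refine ⟨h1.1, ?_⟩
      funext j
      have hzj : t j - psi E I j = 0 := congrFun hz j
      have := h1.2 j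
      omega
    · rfl

end KIndepAux

open KIndepAux

/-- Let `H` be a hypergraph with `n` vertices and `m` nonempty
hyperedges and no isolated vertices, fix `k ≥ 1`, and label every hyperedge with a
generalized zeon generator of nilpotency index `k + 1` (signature `s = (k+1, …, k+1)`),
giving `Φ = Σ_i (∏_{j : v_i ∈ e_j} ν_j) ⊗ ε_i`.  Then for every `r ≥ 1` and every
vertex subset `I` with `|I| = r`, the component of `Φ^r` on the idem-Clifford blade
`ε_I` equals `r! (∏_{i ∈ I} ∏_{j : v_i ∈ e_j} ν_j) ⊗ ε_I` (the generalized-zeon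
monomial with exponent `|e_j ∩ I|` at `ν_j`), and it is nonzero if and only if
`{v_i : i ∈ I}` is a `k`-independent set of `H`, i.e. `|{v_i : i ∈ I} ∩ e_j| ≤ k`
for every hyperedge `e_j`. -/
theorem k_independent_set_component {n m : ℕ} (E : Fin m → Finset (Fin n))
    (hE : ∀ j, (E j).Nonempty) (hiso : ∀ i : Fin n, ∃ j, i ∈ E j)
    (k : ℕ) (hk : 1 ≤ k) (r : ℕ) (hr : 1 ≤ r) (I : Finset (Fin n)) (hI : I.card = r) :
    (∀ t : Fin m → ℕ,
      ((PhiWeak E (fun _ => k + 1)) ^ r) (delta0 n m) (t, I) =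
        (Nat.factorial r : ℝ) *
          ((nuMon n (fun _ => k + 1) (fun j => (E j ∩ I).card) *
              epsBlade (Fin m → ℕ) (Fin n) I) (delta0 n m) (t, I))) ∧
    ((∃ t : Fin m → ℕ,
        ((PhiWeak E (fun _ => k + 1)) ^ r) (delta0 n m) (t, I) ≠ 0) ↔
      ∀ j : Fin m, (E j ∩ I).card ≤ k) := by
  have hs : ∀ j : Fin m, 0 < k + 1 := fun _ => Nat.succ_pos k
  have hmain : ∀ t : Fin m → ℕ,
      ((PhiWeak E (fun _ => k + 1)) ^ r) (delta0 n m) (t, I) =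
        if (∀ j, t j < k + 1) ∧ t = psi E I then (r.factorial : ℝ) else 0 :=
    fun t => pow_apply_card E (fun _ => k + 1) hs r t I hI
  constructor
  · intro t
    rw [hmain t]
    have : (fun j => (E j ∩ I).card) = psi E I := rfl
    rw [this, rhs_apply E (fun _ => k + 1) t I]
    split
    · rw [mul_one]
    · rw [mul_zero]
  · constructor
    · rintro ⟨t, ht⟩
      rw [hmain t] at ht
      by_cases hc : (∀ j, t j < k + 1) ∧ t = psi E I
      · intro j
        have h1 := hc.1 j
        have h2 : t j = psi E I j := congrFun hc.2 j
        have : psi E I j = (E j ∩ I).card := rfl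
        omega
      · rw [if_neg hc] at ht; exact absurd rfl ht
    · intro hk'
      refine ⟨psi E I, ?_⟩
      rw [hmain (psi E I), if_pos ⟨fun j => by have := hk' j; simp only [psi]; omega, rfl⟩]
      exact_mod_cast Nat.factorial_ne_zero r
end

section
/- Let H be a hypergraph on n vertices with zeon incidence representation Γ_H ∈ 𝔷_n. Then for every k ∈ ℕ, Γ_H^k = k! · Σ_{I ⊆ {1,…,n}} α_I ζ_I, where α_I is the number of k-matchings of H whose union of hyperedges is the vertex set indexed by I; equivalently, Γ_H^k = k! · Σ_M ζ_{∪M}, the sum being over all k-element subsets M of the hyperedge set consisting of pairwise disjoint hyperedges. -/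
open Finset

/-- Regular-representation action of the zeon blade `ζ_I` (product of the zeon generators
`ζ_i`, `i ∈ I`, which commute and satisfy `ζ_i ^ 2 = 0`) on the coefficient space of the
zeon algebra `𝔷_n`:  multiplication by `ζ_I` sends the basis blade `ζ_S` to `ζ_{I ∪ S}`
when `I` and `S` are disjoint, and to `0` otherwise. -/
noncomputable def zetaBlade (n : ℕ) (I : Finset (Fin n)) :
    Module.End ℝ (Finset (Fin n) → ℝ) where
  toFun c := fun S => if I ⊆ S then c (S \ I) else 0
  map_add' x y := by
    funext S
    by_cases h : I ⊆ S <;> simp [h]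
  map_smul' r x := by
    funext S
    by_cases h : I ⊆ S <;> simp [h]

open scoped Classical

lemma disj_sup_forall {n : ℕ} {s : Finset (Finset (Fin n))} {e : Finset (Fin n)}
    (h : Disjoint (s.sup id) e) : ∀ a ∈ s, Disjoint a e :=
  fun a ha => h.mono_left (Finset.le_sup (f := id) ha)

lemma zetaBlade_empty (n : ℕ) : zetaBlade n ∅ = 1 := by
  apply LinearMap.ext; intro c; funext S; simp [zetaBlade]

lemma zetaBlade_mul (n : ℕ) (I J : Finset (Fin n)) :
    zetaBlade n I * zetaBlade n J =
      if Disjoint I J then zetaBlade n (I ∪ J) else 0 := by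
  apply LinearMap.ext; intro c; funext S
  rw [Module.End.mul_apply]
  by_cases hd : Disjoint I J
  · simp only [hd, if_true, zetaBlade, LinearMap.coe_mk, AddHom.coe_mk]
    by_cases h1 : I ⊆ S
    · simp only [h1, if_true]
      by_cases h2 : J ⊆ S \ I
      · have h3 : I ∪ J ⊆ S := by
          rw [union_subset_iff]; exact ⟨h1, h2.trans (sdiff_subset)⟩
        simp only [h2, if_true, h3, if_true]
        congr 1
        ext x; simp only [mem_sdiff, mem_union]; tauto
      · have h3 : ¬ (I ∪ J ⊆ S) := by
          intro h; apply h2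
          intro x hx
          have hxS : x ∈ S := h (mem_union_right _ hx)
          have hxI : x ∉ I := fun hxI => disjoint_left.mp hd hxI hx
          exact mem_sdiff.mpr ⟨hxS, hxI⟩
        simp [h2, h3]
    · have h3 : ¬ (I ∪ J ⊆ S) := fun h => h1 (union_subset_iff.mp h).1
      simp [h1, h3]
  · simp only [hd, if_false, LinearMap.zero_apply, Pi.zero_apply]
    simp only [zetaBlade, LinearMap.coe_mk, AddHom.coe_mk]
    by_cases h1 : I ⊆ S
    · simp only [h1, if_true]
      have h2 : ¬ (J ⊆ S \ I) := by
        intro h; apply hd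
        exact disjoint_left.mpr (fun x hxI hxJ => (mem_sdiff.mp (h hxJ)).2 hxI)
      simp [h2]
    · simp [h1]

/-- Let `H` be a hypergraph on `n` vertices with (nonempty) hyperedge
set `E`, and let `Γ_H = Σ_{e ∈ E} ζ_e` be its zeon incidence representation.  Then for
every `k ∈ ℕ`, `Γ_H^k = k! Σ_M ζ_{∪M}`, the sum being over all `k`-element subsets `M`
of `E` consisting of pairwise disjoint hyperedges (i.e. over all `k`-matchings of `H`). -/
theorem zeon_incidence_representation_matchings {n : ℕ}
    (E : Finset (Finset (Fin n))) (hE : ∀ e ∈ E, e.Nonempty) (k : ℕ) :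
    (∑ e ∈ E, zetaBlade n e) ^ k =
      (Nat.factorial k) •
        ∑ M ∈ (E.powersetCard k).filter
            (fun M => ∀ a ∈ M, ∀ b ∈ M, a ≠ b → Disjoint a b),
          zetaBlade n (M.sup id) := by
  induction k with
  | zero =>
      simp [Finset.powersetCard_zero, Finset.filter_singleton, zetaBlade_empty]
  | succ k ih =>
      set mk := (E.powersetCard k).filter
          (fun M => ∀ a ∈ M, ∀ b ∈ M, a ≠ b → Disjoint a b) with hmk
      set mk1 := (E.powersetCard (k+1)).filter
          (fun M => ∀ a ∈ M, ∀ b ∈ M, a ≠ b → Disjoint a b) with hmk1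
      rw [pow_succ, ih, smul_mul_assoc, Finset.sum_mul_sum]
      have key : (∑ M ∈ mk, ∑ e ∈ E, zetaBlade n (M.sup id) * zetaBlade n e)
          = (k+1) • ∑ M ∈ mk1, zetaBlade n (M.sup id) := by
        have lhs_eq : (∑ M ∈ mk, ∑ e ∈ E, zetaBlade n (M.sup id) * zetaBlade n e)
            = ∑ p ∈ (mk ×ˢ E).filter (fun p => Disjoint (p.1.sup id) p.2),
                zetaBlade n (p.1.sup id ∪ p.2) := by
          conv_rhs => rw [Finset.sum_filter, Finset.sum_product]
          refine Finset.sum_congr rfl fun M _ => Finset.sum_congr rfl fun e _ => ?_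
          rw [zetaBlade_mul]
        have rhs_eq : ((k+1) • ∑ M ∈ mk1, zetaBlade n (M.sup id))
            = ∑ q ∈ (mk1 ×ˢ E).filter (fun q => q.2 ∈ q.1),
                zetaBlade n (q.1.sup id) := by
          conv_rhs => rw [Finset.sum_filter, Finset.sum_product]
          rw [Finset.smul_sum]
          refine Finset.sum_congr rfl fun M hM => ?_
          have hME : M ⊆ E := by
            rw [hmk1] at hM
            exact (mem_powersetCard.mp (mem_filter.mp hM).1).1
          have hcard : M.card = k + 1 := by
            rw [hmk1] at hM
            exact (mem_powersetCard.mp (mem_filter.mp hM).1).2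
          rw [← Finset.sum_filter]
          have hf : E.filter (fun e => e ∈ M) = M := by
            ext e; simp only [mem_filter]
            exact ⟨fun h => h.2, fun h => ⟨hME h, h⟩⟩
          rw [hf]
          rw [show (∑ a ∈ M, zetaBlade n ((M, a).1.sup id))
              = ∑ _a ∈ M, zetaBlade n (M.sup id) from rfl]
          rw [Finset.sum_const, hcard]
        rw [lhs_eq, rhs_eq]
        refine Finset.sum_nbij' (fun p => (insert p.2 p.1, p.2))
          (fun q => (q.1.erase q.2, q.2)) ?_ ?_ ?_ ?_ ?_
        · rintro ⟨M, e⟩ hp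
          simp only [mem_filter, mem_product] at hp ⊢
          obtain ⟨⟨hMmk, heE⟩, hdisj⟩ := hp
          rw [hmk, mem_filter, mem_powersetCard] at hMmk
          obtain ⟨⟨hME, hMcard⟩, hMpair⟩ := hMmk
          have heM : e ∉ M := by
            intro heM
            have hee : Disjoint e e := disj_sup_forall hdisj e heM
            exact (hE e heE).ne_empty (disjoint_self.mp hee)
          refine ⟨⟨?_, heE⟩, mem_insert_self _ _⟩
          rw [hmk1, mem_filter, mem_powersetCard]
          refine ⟨⟨insert_subset heE hME, ?_⟩, ?_⟩
          · rw [card_insert_of_notMem heM, hMcard]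
          · intro a ha b hb hab
            rcases mem_insert.mp ha with rfl | haM
            · rcases mem_insert.mp hb with rfl | hbM
              · exact absurd rfl hab
              · exact (disj_sup_forall hdisj b hbM).symm
            · rcases mem_insert.mp hb with rfl | hbM
              · exact disj_sup_forall hdisj a haM
              · exact hMpair a haM b hbM hab
        · rintro ⟨M, e⟩ hq
          simp only [mem_filter, mem_product] at hq ⊢
          obtain ⟨⟨hMmk1, heE⟩, heM⟩ := hq
          rw [hmk1, mem_filter, mem_powersetCard] at hMmk1
          obtain ⟨⟨hME, hMcard⟩, hMpair⟩ := hMmk1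
          refine ⟨⟨?_, heE⟩, ?_⟩
          · rw [hmk, mem_filter, mem_powersetCard]
            refine ⟨⟨(erase_subset _ _).trans hME, ?_⟩, ?_⟩
            · rw [card_erase_of_mem heM, hMcard]; rfl
            · intro a ha b hb hab
              exact hMpair a (mem_of_mem_erase ha) b (mem_of_mem_erase hb) hab
          · rw [Finset.disjoint_sup_left]
            intro a ha
            exact hMpair a (mem_of_mem_erase ha) e heM (ne_of_mem_erase ha)
        · rintro ⟨M, e⟩ hp
          simp only [mem_filter, mem_product] at hp
          obtain ⟨⟨hMmk, heE⟩, hdisj⟩ := hp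
          rw [hmk, mem_filter, mem_powersetCard] at hMmk
          have heM : e ∉ M := by
            intro heM
            have hee : Disjoint e e := disj_sup_forall hdisj e heM
            exact (hE e heE).ne_empty (disjoint_self.mp hee)
          simp [erase_insert heM]
        · rintro ⟨M, e⟩ hq
          simp only [mem_filter, mem_product] at hq
          simp [insert_erase hq.2]
        · rintro ⟨M, e⟩ _
          simp only
          congr 1
          rw [Finset.sup_insert, id_eq, union_comm]
          rfl
      rw [key, smul_smul, Nat.factorial_succ, Nat.mul_comm k.factorial (k+1)]
end

section
/- Let H be a hypergraph on n vertices with zeon incidence representation Γ_H ∈ 𝔷_n. Then for every k ∈ ℕ, Γ_H^k ≠ 0 if and only if H contains a k-matching, i.e. k pairwise disjoint hyperedges. -/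
open Finset

/-!
Expanding `Γ^k` on the blade `ζ_S`, every term is a product `ζ_{e₁} ⋯ ζ_{e_k}`, which is the blade
`ζ_{e₁ ∪ ⋯ ∪ e_k}` if the `eᵢ` are pairwise disjoint and `0` otherwise. All coefficients are
nonnegative, so nothing cancels: `Γ^k ≠ 0` exactly when some such product survives, i.e. when there
are `k` pairwise disjoint hyperedges (distinct, because they are nonempty).
-/

variable {n : ℕ}

lemma zetaBlade_apply (I : Finset (Fin n)) (c : Finset (Fin n) → ℝ) (S : Finset (Fin n)) :
    zetaBlade n I c S = if I ⊆ S then c (S \ I) else 0 :=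
  rfl

noncomputable def zeonIncidence (E : Finset (Finset (Fin n))) :
    Module.End ℝ (Finset (Fin n) → ℝ) :=
  ∑ e ∈ E, zetaBlade n e

section zeonIncidence

variable {E : Finset (Finset (Fin n))}

lemma zeonIncidence_apply (c : Finset (Fin n) → ℝ) (S : Finset (Fin n)) :
    zeonIncidence E c S = ∑ e ∈ E with e ⊆ S, c (S \ e) := by
  simp only [zeonIncidence, LinearMap.sum_apply, Finset.sum_apply, zetaBlade_apply, sum_filter]

lemma zeonIncidence_pow_succ_apply (k : ℕ) (c : Finset (Fin n) → ℝ) :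
    (zeonIncidence E ^ (k + 1)) c = zeonIncidence E ((zeonIncidence E ^ k) c) := by
  rw [pow_succ', Module.End.mul_apply]

lemma zeonIncidence_pow_nonneg (k : ℕ) {c : Finset (Fin n) → ℝ} (hc : 0 ≤ c) :
    0 ≤ (zeonIncidence E ^ k) c := by
  induction k with
  | zero => simpa using hc
  | succ k ih =>
    rw [zeonIncidence_pow_succ_apply]
    intro S
    rw [zeonIncidence_apply]
    exact sum_nonneg fun e _ => ih _

lemma apply_sdiff_le_zeonIncidence_apply {c : Finset (Fin n) → ℝ} (hc : 0 ≤ c)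
    {e S : Finset (Fin n)} (he : e ∈ E) (heS : e ⊆ S) :
    c (S \ e) ≤ zeonIncidence E c S := by
  rw [zeonIncidence_apply]
  exact single_le_sum (fun f _ => hc (S \ f)) (mem_filter.2 ⟨he, heS⟩)

lemma apply_sdiff_sup_le_zeonIncidence_pow_apply {M : Finset (Finset (Fin n))} (hME : M ⊆ E)
    (hM : (M : Set (Finset (Fin n))).PairwiseDisjoint id) {c : Finset (Fin n) → ℝ} (hc : 0 ≤ c)
    {T : Finset (Fin n)} (hMT : M.sup id ⊆ T) :
    c (T \ M.sup id) ≤ (zeonIncidence E ^ #M) c T := by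
  induction M using Finset.induction_on generalizing T with
  | empty => simp
  | insert e M he ih =>
    rw [coe_insert, Set.pairwiseDisjoint_insert_of_notMem he] at hM
    have heM : Disjoint e (M.sup id) := Finset.disjoint_sup_right.2 hM.2
    rw [sup_insert, id, sup_eq_union, union_subset_iff] at hMT
    calc c (T \ (insert e M).sup id)
        = c ((T \ e) \ M.sup id) := by rw [sup_insert, id, sdiff_sdiff_left]
      _ ≤ (zeonIncidence E ^ #M) c (T \ e) :=
          ih ((subset_insert e M).trans hME) hM.1 (subset_sdiff.2 ⟨hMT.2, heM.symm⟩)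
      _ ≤ zeonIncidence E ((zeonIncidence E ^ #M) c) T :=
          apply_sdiff_le_zeonIncidence_apply (zeonIncidence_pow_nonneg _ hc)
            (hME (mem_insert_self e M)) hMT.1
      _ = (zeonIncidence E ^ #(insert e M)) c T := by
          rw [card_insert_of_notMem he, zeonIncidence_pow_succ_apply]

lemma exists_pairwiseDisjoint_of_zeonIncidence_pow_apply_ne_zero (hE : ∀ e ∈ E, e.Nonempty)
    {k : ℕ} {c : Finset (Fin n) → ℝ} {S : Finset (Fin n)}
    (h : (zeonIncidence E ^ k) c S ≠ 0) :
    ∃ M ⊆ E, #M = k ∧ (M : Set (Finset (Fin n))).PairwiseDisjoint id ∧ M.sup id ⊆ S := by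
  induction k generalizing S with
  | zero => exact ⟨∅, empty_subset E, rfl, by simp, by simp⟩
  | succ k ih =>
    rw [zeonIncidence_pow_succ_apply, zeonIncidence_apply] at h
    obtain ⟨e, he, hne⟩ := exists_ne_zero_of_sum_ne_zero h
    rw [mem_filter] at he
    obtain ⟨M, hME, rfl, hM, hMS⟩ := ih hne
    have heM : Disjoint e (M.sup id) := (subset_sdiff.1 hMS).2.symm
    have he_notMem : e ∉ M := fun he_mem => (hE e he.1).ne_empty <|
      (disjoint_self_iff_empty e).1 (heM.mono_right (le_sup (f := id) he_mem))
    refine ⟨insert e M, insert_subset he.1 hME, card_insert_of_notMem he_notMem, ?_, ?_⟩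
    · rw [coe_insert, Set.pairwiseDisjoint_insert_of_notMem he_notMem]
      exact ⟨hM, Finset.disjoint_sup_right.1 heM⟩
    · rw [sup_insert, id, sup_eq_union]
      exact union_subset he.2 (hMS.trans sdiff_subset)

end zeonIncidence

/-- Let `H` be a hypergraph on `n` vertices with (nonempty) hyperedge
set `E`, and let `Γ_H = Σ_{e ∈ E} ζ_e` be its zeon incidence representation.  Then for
every `k ∈ ℕ`, `Γ_H^k ≠ 0` if and only if `H` contains a `k`-matching, i.e. `k`
pairwise disjoint hyperedges. -/
theorem zeon_incidence_power_ne_zero_iff_matching {n : ℕ}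
    (E : Finset (Finset (Fin n))) (hE : ∀ e ∈ E, e.Nonempty) (k : ℕ) :
    (∑ e ∈ E, zetaBlade n e) ^ k ≠ 0 ↔
      ∃ M : Finset (Finset (Fin n)), M ⊆ E ∧ M.card = k ∧
        ∀ a ∈ M, ∀ b ∈ M, a ≠ b → Disjoint a b := by
  change zeonIncidence E ^ k ≠ 0 ↔ _
  constructor
  · intro h
    obtain ⟨c, S, hcS⟩ : ∃ c S, (zeonIncidence E ^ k) c S ≠ 0 := by
      by_contra! h0
      exact h (LinearMap.ext fun c => funext (h0 c))
    obtain ⟨M, hME, hM, hdisj, -⟩ :=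
      exists_pairwiseDisjoint_of_zeonIncidence_pow_apply_ne_zero hE hcS
    exact ⟨M, hME, hM, hdisj⟩
  · rintro ⟨M, hME, rfl, hdisj⟩ h0
    -- `Pi.single ∅ 1` is the unit `ζ_∅ = 1` of the zeon algebra.
    have hδ : (0 : Finset (Fin n) → ℝ) ≤ Pi.single ∅ 1 := Pi.single_nonneg.2 zero_le_one
    have h1 := apply_sdiff_sup_le_zeonIncidence_pow_apply hME hdisj hδ subset_rfl
    rw [h0, sdiff_self, bot_eq_empty] at h1
    norm_num at h1
end

section
/- Let H be an r-uniform hypergraph on rn vertices with zeon incidence representation Γ_H ∈ 𝔷_{rn}, let μ_H denote the number of perfect matchings of H (collections of n pairwise disjoint hyperedges covering all vertices), and let α_{[rn]} denote the coefficient of the top blade ζ_{{1,…,rn}} in the basis expansion of Γ_H^n. Then μ_H = α_{[rn]} / n!. -/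
open Finset

lemma sup_univ_cons {m k : ℕ} (x : Finset (Fin m)) (g : Fin k → Finset (Fin m)) :
    (univ : Finset (Fin (k+1))).sup (Fin.cons x g : Fin (k+1) → Finset (Fin m)) =
      x ⊔ (univ : Finset (Fin k)).sup g := by
  rw [Fin.univ_succ, Finset.sup_cons, Finset.sup_map]
  simp [Function.comp_def]

lemma cons_cond_iff' {m k : ℕ} (x : Finset (Fin m)) (g : Fin k → Finset (Fin m))
    (S : Finset (Fin m)) :
    ((∀ i j : Fin (k+1), i ≠ j → Disjoint ((Fin.cons x g : Fin (k+1) → Finset (Fin m)) i)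
        ((Fin.cons x g : Fin (k+1) → Finset (Fin m)) j)) ∧
      (univ : Finset (Fin (k+1))).sup (Fin.cons x g : Fin (k+1) → Finset (Fin m)) = S)
    ↔ (x ⊆ S ∧ ((∀ i j : Fin k, i ≠ j → Disjoint (g i) (g j)) ∧
        (univ : Finset (Fin k)).sup g = S \ x)) := by
  constructor
  · rintro ⟨hd, hs⟩
    rw [sup_univ_cons] at hs
    have hdx : Disjoint x ((univ : Finset (Fin k)).sup g) := by
      rw [Finset.disjoint_sup_right]
      intro i _
      simpa using hd 0 i.succ (Fin.succ_ne_zero i).symm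
    refine ⟨?_, ⟨fun i j hij => by
      simpa using hd i.succ j.succ (by simpa using hij), ?_⟩⟩
    · rw [← hs, Finset.sup_eq_union]; exact Finset.subset_union_left
    · rw [← hs, Finset.sup_eq_union, Finset.union_sdiff_cancel_left hdx]
  · rintro ⟨hxS, hd, hs⟩
    have hdx : Disjoint x ((univ : Finset (Fin k)).sup g) := by
      rw [hs]; exact Finset.disjoint_sdiff
    constructor
    · intro i j hij
      rcases Fin.eq_zero_or_eq_succ i with rfl | ⟨i', rfl⟩ <;>
        rcases Fin.eq_zero_or_eq_succ j with rfl | ⟨j', rfl⟩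
      · exact absurd rfl hij
      · simpa using hdx.mono_right (Finset.le_sup (f := g) (Finset.mem_univ j'))
      · simpa using (hdx.mono_right (Finset.le_sup (f := g) (Finset.mem_univ i'))).symm
      · simpa using hd i' j' (by simpa using hij)
    · rw [sup_univ_cons, hs, Finset.sup_eq_union, Finset.union_sdiff_of_subset hxS]

lemma cons_cond_iff {m k : ℕ} {X : Type} (c : X → Finset (Fin m)) (x : X)
    (g : Fin k → X) (S : Finset (Fin m)) :
    ((∀ i j : Fin (k+1), i ≠ j →
        Disjoint (c ((Fin.cons x g : Fin (k+1) → X) i)) (c ((Fin.cons x g : Fin (k+1) → X) j))) ∧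
      (univ : Finset (Fin (k+1))).sup (fun i => c ((Fin.cons x g : Fin (k+1) → X) i)) = S)
    ↔ (c x ⊆ S ∧ ((∀ i j : Fin k, i ≠ j → Disjoint (c (g i)) (c (g j))) ∧
        (univ : Finset (Fin k)).sup (fun i => c (g i)) = S \ c x)) := by
  have hcc : ∀ i, c ((Fin.cons x g : Fin (k+1) → X) i)
      = (Fin.cons (c x) (fun i => c (g i)) : Fin (k+1) → Finset (Fin m)) i := by
    intro i
    rcases Fin.eq_zero_or_eq_succ i with rfl | ⟨i', rfl⟩ <;> simp
  simp only [hcc]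
  exact cons_cond_iff' (c x) (fun i => c (g i)) S

lemma key_eval (m : ℕ) (E : Finset (Finset (Fin m))) (k : ℕ) (S : Finset (Fin m)) :
    (((∑ e ∈ E, zetaBlade m e) ^ k)
        (fun T => if T = (∅ : Finset (Fin m)) then (1 : ℝ) else 0)) S
    = ∑ f : Fin k → {e // e ∈ E},
        if ((∀ i j, i ≠ j → Disjoint (f i : Finset (Fin m)) (f j : Finset (Fin m))) ∧
            (univ : Finset (Fin k)).sup (fun i => (f i : Finset (Fin m))) = S)
        then (1 : ℝ) else 0 := by
  induction k generalizing S with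
  | zero =>
    simp only [pow_zero, Module.End.one_apply]
    rw [Fintype.sum_eq_single (fun i => Fin.elim0 i)] ; swap
    · intro f hf; exact absurd (funext fun i => Fin.elim0 i) hf
    simp [eq_comm]
  | succ k ih =>
    have zeta_apply : ∀ (I : Finset (Fin m)) (c : Finset (Fin m) → ℝ) (T : Finset (Fin m)),
        zetaBlade m I c T = if I ⊆ T then c (T \ I) else 0 := fun _ _ _ => rfl
    rw [pow_succ', Module.End.mul_apply, LinearMap.sum_apply, Finset.sum_apply]
    simp only [zeta_apply, ih]
    rw [Fintype.sum_equiv (Fin.consEquiv (fun _ => ({e // e ∈ E} : Type))).symm _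
      (fun p => if ((p.1 : Finset (Fin m)) ⊆ S ∧
          ((∀ i j : Fin k, i ≠ j → Disjoint (p.2 i : Finset (Fin m)) (p.2 j : Finset (Fin m))) ∧
            (univ : Finset (Fin k)).sup (fun i => (p.2 i : Finset (Fin m))) = S \ (p.1 : Finset (Fin m))))
        then (1:ℝ) else 0)]
    · rw [Fintype.sum_prod_type]
      rw [← Finset.sum_coe_sort E]
      refine Finset.sum_congr rfl fun e _ => ?_
      by_cases h : (e : Finset (Fin m)) ⊆ S <;> simp [h]
    · intro f
      have hf : f = (Fin.cons (f 0) (fun i => f i.succ) : Fin (k+1) → {e // e ∈ E}) := by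
        funext i
        rcases Fin.eq_zero_or_eq_succ i with rfl | ⟨i', rfl⟩ <;> simp
      conv_lhs => rw [hf]
      have hsymm : (Fin.consEquiv (fun _ => ({e // e ∈ E} : Type))).symm f
          = (f 0, fun i => f i.succ) := rfl
      rw [hsymm]
      exact if_congr (cons_cond_iff (X := {e // e ∈ E}) (fun x => (x : Finset (Fin m)))
        (f 0) (fun i => f i.succ) S) rfl rfl

lemma matching_card {r n : ℕ} (hr : 0 < r) (E : Finset (Finset (Fin (r*n))))
    (hunif : ∀ e ∈ E, e.card = r)
    (M : Finset (Finset (Fin (r*n)))) (hME : M ⊆ E)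
    (hdisj : ∀ a ∈ M, ∀ b ∈ M, a ≠ b → Disjoint a b)
    (hsup : M.sup id = (univ : Finset (Fin (r*n)))) : M.card = n := by
  have h1 : (M.sup id).card = ∑ e ∈ M, e.card := by
    rw [Finset.sup_eq_biUnion]
    exact Finset.card_biUnion (fun a ha b hb hab => hdisj a ha b hb hab)
  rw [hsup] at h1
  have h2 : ∑ e ∈ M, e.card = M.card * r :=
    (Finset.sum_congr rfl fun e he => hunif e (hME he)).trans (by rw [Finset.sum_const, smul_eq_mul])
  have h3 : (univ : Finset (Fin (r*n))).card = r * n := by simp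
  exact Nat.eq_of_mul_eq_mul_right hr (by rw [← h2, ← h1, h3, Nat.mul_comm])

lemma fiber_card {m n : ℕ} (E : Finset (Finset (Fin m))) (M : Finset (Finset (Fin m)))
    (hME : M ⊆ E) (hMn : M.card = n) :
    (univ.filter (fun f : Fin n → {e // e ∈ E} =>
        Finset.image (fun i => (f i : Finset (Fin m))) univ = M)).card = Nat.factorial n := by
  classical
  have e0 : Fin n ≃ {x // x ∈ M} := Fintype.equivOfCardEq (by simp [hMn])
  have eqv : {f : Fin n → {e // e ∈ E} //
      Finset.image (fun i => (f i : Finset (Fin m))) univ = M} ≃ (Fin n ≃ {x // x ∈ M}) := by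
    refine
      { toFun := fun fp =>
          Equiv.ofBijective (fun i => (⟨(fp.1 i : Finset (Fin m)),
            (Finset.ext_iff.mp fp.2 _).mp
              (Finset.mem_image_of_mem _ (Finset.mem_univ i))⟩ : {x // x ∈ M})) ?_
        invFun := fun e => ⟨fun i => ⟨(e i : Finset (Fin m)), hME (e i).2⟩, ?_⟩
        left_inv := fun fp => Subtype.ext (funext fun i => Subtype.ext rfl)
        right_inv := fun e => Equiv.ext fun i => Subtype.ext rfl }
    · obtain ⟨f, hf⟩ := fp
      have hinj : Function.Injective (fun i => (f i : Finset (Fin m))) := by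
        have hio : Set.InjOn (fun i => (f i : Finset (Fin m))) (univ : Finset (Fin n)) := by
          rw [← Finset.card_image_iff, hf, hMn]; simp
        intro a b hab
        exact hio (by simp) (by simp) hab
      rw [Fintype.bijective_iff_injective_and_card]
      refine ⟨fun a b hab => hinj ?_, by simp [hMn]⟩
      have h2 := congrArg (fun (x : {x // x ∈ M}) => x.val) hab
      simpa using h2
    · ext x
      simp only [Finset.mem_image, Finset.mem_univ, true_and]
      constructor
      · rintro ⟨i, rfl⟩; exact (e i).2
      · intro hx; exact ⟨e.symm ⟨x, hx⟩, by simp⟩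
  rw [← Fintype.card_subtype, Fintype.card_congr eqv, Fintype.card_equiv e0]
  simp

/-- Let `H` be an `r`-uniform hypergraph on `r * n` vertices with
hyperedge set `E`, and let `Γ_H = Σ_{e ∈ E} ζ_e ∈ 𝔷_{rn}` be its zeon incidence
representation.  Let `μ_H` be the number of perfect matchings of `H` (sets of pairwise
disjoint hyperedges covering all vertices) and let `α` be the coefficient of the top
blade `ζ_{{1,…,rn}}` in `Γ_H^n` (read off by applying the multiplication operator to
the coefficient vector of `1`).  Then `μ_H = α / n!`. -/
theorem zeon_perfect_matching_count {r n : ℕ} (hr : 0 < r)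
    (E : Finset (Finset (Fin (r * n)))) (hunif : ∀ e ∈ E, e.card = r) :
    (Nat.card {M : Finset (Finset (Fin (r * n))) // M ⊆ E ∧
        (∀ a ∈ M, ∀ b ∈ M, a ≠ b → Disjoint a b) ∧
        M.sup id = (Finset.univ : Finset (Fin (r * n)))} : ℝ) =
      (((∑ e ∈ E, zetaBlade (r * n) e) ^ n)
          (fun S => if S = (∅ : Finset (Fin (r * n))) then (1 : ℝ) else 0))
          (Finset.univ : Finset (Fin (r * n))) / (Nat.factorial n) := by
  classical
  set F : Finset (Finset (Finset (Fin (r * n)))) := univ.filter (fun M => M ⊆ E ∧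
      (∀ a ∈ M, ∀ b ∈ M, a ≠ b → Disjoint a b) ∧
      M.sup id = (Finset.univ : Finset (Fin (r * n)))) with hF
  have hμ : (Nat.card {M : Finset (Finset (Fin (r * n))) // M ⊆ E ∧
      (∀ a ∈ M, ∀ b ∈ M, a ≠ b → Disjoint a b) ∧
      M.sup id = (Finset.univ : Finset (Fin (r * n)))}) = F.card := by
    rw [Nat.card_eq_fintype_card, Fintype.card_subtype]
  rw [key_eval]
  rw [Finset.sum_boole]
  set A : Finset (Fin n → {e // e ∈ E}) := univ.filter (fun f =>
      (∀ i j, i ≠ j → Disjoint (f i : Finset (Fin (r * n))) (f j : Finset (Fin (r * n)))) ∧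
      (univ : Finset (Fin n)).sup (fun i => (f i : Finset (Fin (r * n)))) = univ) with hA
  have hAF : ∀ f ∈ A, Finset.image (fun i => (f i : Finset (Fin (r * n)))) univ ∈ F := by
    intro f hf
    rw [hA, Finset.mem_filter] at hf
    obtain ⟨-, hd, hs⟩ := hf
    rw [hF, Finset.mem_filter]
    refine ⟨Finset.mem_univ _, ?_, ?_, ?_⟩
    · intro x hx
      obtain ⟨i, -, rfl⟩ := Finset.mem_image.mp hx
      exact (f i).2
    · intro a ha b hb hab
      obtain ⟨i, -, rfl⟩ := Finset.mem_image.mp ha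
      obtain ⟨j, -, rfl⟩ := Finset.mem_image.mp hb
      exact hd i j (fun h => hab (by rw [h]))
    · rw [Finset.sup_image]
      simpa [Function.comp_def] using hs
  have hAcard : A.card = F.card * Nat.factorial n := by
    rw [Finset.card_eq_sum_card_fiberwise hAF]
    rw [Finset.sum_congr rfl (fun M hM => ?_), Finset.sum_const, smul_eq_mul]
    rw [hF, Finset.mem_filter] at hM
    obtain ⟨-, hME, hMd, hMs⟩ := hM
    have hMn : M.card = n := matching_card hr E hunif M hME hMd hMs
    have hfilter : A.filter
          (fun f => Finset.image (fun i => (f i : Finset (Fin (r * n)))) univ = M)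
        = univ.filter (fun f : Fin n → {e // e ∈ E} =>
            Finset.image (fun i => (f i : Finset (Fin (r * n)))) univ = M) := by
      ext f
      simp only [hA, Finset.mem_filter, Finset.mem_univ, true_and, and_iff_right_iff_imp]
      intro hfM
      have hio : Set.InjOn (fun i => (f i : Finset (Fin (r * n)))) (univ : Finset (Fin n)) := by
        rw [← Finset.card_image_iff, hfM, hMn]; simp
      refine ⟨?_, ?_⟩
      · intro i j hij
        refine hMd _ ((Finset.ext_iff.mp hfM _).mp (Finset.mem_image_of_mem _ (Finset.mem_univ i)))
          _ ((Finset.ext_iff.mp hfM _).mp (Finset.mem_image_of_mem _ (Finset.mem_univ j))) ?_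
        intro h
        exact hij (hio (by simp) (by simp) h)
      · have h5 : (Finset.image (fun i => (f i : Finset (Fin (r * n)))) univ).sup id
            = M.sup id := by rw [hfM]
        rw [Finset.sup_image] at h5
        simpa [Function.comp_def] using h5.trans hMs
    rw [hfilter, fiber_card E M hME hMn]
  rw [hμ, hAcard]
  have hpos : (0:ℝ) < Nat.factorial n := by exact_mod_cast Nat.factorial_pos n
  push_cast
  field_simp
end
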